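/- The space L_n := span{L_0, L_1, ..., L_n} is an (n+1)-dimensional D-invariant subspace of ℝ[x_1, ..., x_d]: the polynomials L_0, ..., L_n are linearly independent over ℝ, and for every s ∈ {1, ..., d} and every k ∈ {0, ..., n}, the partial derivative ∂L_k/∂x_s lies in span{L_0, ..., L_n}. -/

import Mathlib

/-- The explicit breadth-one basis polynomial `L_k` (Corollary 3.4):
`L_k = ∑ (1/γ₁!) (∏_{s=2}^d ∏_{j=2}^n a_{j,s}^{γ_{s,j}}/γ_{s,j}!) x₁^{γ₁} ∏_{s=2}^d x_s^{|γ_s|}`,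
the sum being over `γ₁ ∈ ℕ` and `γ_{s,j} ∈ ℕ` with `γ₁ + ∑_{s,j} j·γ_{s,j} = k`.
Variables `x₁,…,x_d` are the coordinates `0,…,d-1` of `Fin d`; the index `s : Fin (d-1)`
stands for the variable `x_{s+2}` and `j : Fin (n-1)` for the degree weight `j+2`. -/
noncomputable def Lpoly (d n : ℕ) (hd : 1 ≤ d) (a : ℕ → ℕ → ℝ) (k : ℕ) :
    MvPolynomial (Fin d) ℝ :=
  ∑ g1 ∈ Finset.range (k + 1),
    ∑ g ∈ (Finset.Icc (0 : Fin (d - 1) → Fin (n - 1) → ℕ) fun _ _ => k).filter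
        (fun g => g1 + ∑ s, ∑ j, (j.val + 2) * g s j = k),
      MvPolynomial.C ((1 / (g1.factorial : ℝ)) *
          ∏ s, ∏ j, a (j.val + 2) (s.val + 2) ^ g s j / ((g s j).factorial : ℝ)) *
        MvPolynomial.X (⟨0, hd⟩ : Fin d) ^ g1 *
        ∏ s : Fin (d - 1),
          MvPolynomial.X (⟨s.val + 1, by have := s.isLt; omega⟩ : Fin d) ^ (∑ j, g s j)



/-!
`L_k` is the coefficient of `t ^ k` in `exp (x₁ t + ∑_{s,j} a_{j,s} t ^ j x_s)`. Differentiating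
this generating function in `x₁` multiplies it by `t`, and in `x_s` by `∑_j a_{j,s} t ^ j`; hence
`∂₁ L_k = L_{k-1}` and `∂_s L_k = ∑_j a_{j,s} L_{k-j}`, so the span of `L_0, …, L_n` is closed under
all partial derivatives. The coefficient of `x₁ ^ m` in `L_k` is `δ_{mk} / k!`, which gives linear
independence and hence the dimension.
-/

open MvPolynomial Finset

section ExpCoeff

variable {ι σ K : Type*} [Fintype ι] [DecidableEq ι] [Field K] {v : ι → σ} {w : ι → ℕ} {c : ι → K}

def weightedExponents (w : ι → ℕ) (k : ℕ) : Finset (ι → ℕ) :=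
  (Fintype.piFinset fun _ => range (k + 1)).filter fun γ => ∑ i, w i * γ i = k

noncomputable def monomialDegree (v : ι → σ) (γ : ι → ℕ) : σ →₀ ℕ :=
  ∑ i, Finsupp.single (v i) (γ i)

noncomputable def powDivFactorial (c : ι → K) (γ : ι → ℕ) : K :=
  ∏ i, c i ^ γ i / (γ i).factorial

/-- The coefficient of `t ^ k` in `exp (∑ i, c i * t ^ w i * X (v i))`. -/
noncomputable def expCoeff (v : ι → σ) (w : ι → ℕ) (c : ι → K) (k : ℕ) : MvPolynomial σ K :=
  ∑ γ ∈ weightedExponents w k, monomial (monomialDegree v γ) (powDivFactorial c γ)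

omit [DecidableEq ι] [Field K] in
lemma mul_le_of_weighted_sum_eq {γ : ι → ℕ} {k : ℕ} (h : ∑ i, w i * γ i = k) (i : ι) :
    w i * γ i ≤ k :=
  h ▸ single_le_sum (f := fun j => w j * γ j) (fun _ _ => Nat.zero_le _) (mem_univ i)

omit [DecidableEq ι] [Field K] in
lemma le_of_weighted_sum_eq (hw : ∀ i, 0 < w i) {γ : ι → ℕ} {k : ℕ}
    (h : ∑ i, w i * γ i = k) (i : ι) : γ i ≤ k :=
  (Nat.le_mul_of_pos_left _ (hw i)).trans (mul_le_of_weighted_sum_eq h i)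

lemma mem_weightedExponents (hw : ∀ i, 0 < w i) {γ : ι → ℕ} {k : ℕ} :
    γ ∈ weightedExponents w k ↔ ∑ i, w i * γ i = k := by
  simp only [weightedExponents, mem_filter, Fintype.mem_piFinset, mem_range, and_iff_right_iff_imp]
  exact fun h i => Nat.lt_succ_of_le (le_of_weighted_sum_eq hw h i)

lemma weighted_sum_add_single (w γ : ι → ℕ) (i : ι) :
    ∑ j, w j * (γ + Pi.single i 1 : ι → ℕ) j = ∑ j, w j * γ j + w i := by
  simp [mul_add, sum_add_distrib, Pi.single_apply]

lemma monomialDegree_add_single (v : ι → σ) (γ : ι → ℕ) (i : ι) :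
    monomialDegree v (γ + Pi.single i 1) = monomialDegree v γ + Finsupp.single (v i) 1 := by
  simp only [monomialDegree, Pi.add_apply, Finsupp.single_add, sum_add_distrib, add_right_inj]
  rw [Fintype.sum_eq_single i fun j hj => by simp [Pi.single_eq_of_ne hj], Pi.single_eq_same]

omit [DecidableEq ι] in
lemma monomialDegree_apply [DecidableEq σ] (v : ι → σ) (γ : ι → ℕ) (x : σ) :
    monomialDegree v γ x = ∑ i ∈ univ.filter (v · = x), γ i := by
  simp [monomialDegree, Finsupp.finsetSum_apply, Finsupp.single_apply, sum_filter]

lemma powDivFactorial_add_single [CharZero K] (c : ι → K) (γ : ι → ℕ) (i : ι) :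
    powDivFactorial c (γ + Pi.single i 1) * (γ i + 1) = c i * powDivFactorial c γ := by
  have hfac : ((γ i).factorial : K) ≠ 0 := Nat.cast_ne_zero.mpr (Nat.factorial_ne_zero _)
  rw [powDivFactorial, powDivFactorial, Fintype.prod_eq_mul_prod_compl i,
    Fintype.prod_eq_mul_prod_compl i, prod_congr rfl fun j hj => by
      rw [Pi.add_apply, Pi.single_eq_of_ne (by simpa using hj), add_zero]]
  simp only [Pi.add_apply, Pi.single_eq_same, pow_succ, Nat.factorial_succ, Nat.cast_mul]
  field_simp
  push_cast
  ring

variable [CharZero K]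

lemma sum_monomial_sub_single (hw : ∀ i, 0 < w i) (i : ι) (k : ℕ) :
    ∑ γ ∈ weightedExponents w k, monomial (monomialDegree v γ - Finsupp.single (v i) 1)
        (powDivFactorial c γ * γ i) =
      if w i ≤ k then C (c i) * expCoeff v w c (k - w i) else 0 := by
  split_ifs with hik
  · obtain ⟨k, rfl⟩ := Nat.exists_eq_add_of_le' hik
    rw [Nat.add_sub_cancel, expCoeff, mul_sum]
    simp_rw [C_mul_monomial]
    symm
    -- `γ ↦ γ + Pi.single i 1` hits exactly the exponents of weight `k + w i` with `γ i ≠ 0`.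
    refine sum_of_injOn (· + Pi.single i 1) (add_left_injective _).injOn
      (fun γ hγ => ?_) (fun γ hγ hγ' => ?_) (fun γ _ => ?_)
    · simp only [mem_coe, mem_weightedExponents hw, weighted_sum_add_single] at hγ ⊢
      omega
    · suffices hγi : γ i = 0 by simp [hγi]
      by_contra hγi
      have hγ_eq : γ - Pi.single i 1 + Pi.single i 1 = γ := by
        funext j
        rcases eq_or_ne j i with rfl | hj
        · simp only [Pi.add_apply, Pi.sub_apply, Pi.single_eq_same]
          omega
        · simp [Pi.single_eq_of_ne hj]
      refine hγ' ⟨γ - Pi.single i 1, ?_, hγ_eq⟩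
      have hwt := weighted_sum_add_single w (γ - Pi.single i 1) i
      rw [hγ_eq, (mem_weightedExponents hw).1 hγ] at hwt
      rw [mem_coe, mem_weightedExponents hw]
      omega
    · rw [monomialDegree_add_single, add_tsub_cancel_right, Pi.add_apply, Pi.single_eq_same,
        Nat.cast_add, Nat.cast_one, powDivFactorial_add_single]
  · refine sum_eq_zero fun γ hγ => ?_
    have hγi : γ i = 0 := by
      by_contra h
      exact hik <| (Nat.le_mul_of_pos_right _ (Nat.pos_of_ne_zero h)).trans
        (mul_le_of_weighted_sum_eq ((mem_weightedExponents hw).1 hγ) i)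
    simp [hγi]

theorem pderiv_expCoeff [DecidableEq σ] (hw : ∀ i, 0 < w i) (x : σ) (k : ℕ) :
    pderiv x (expCoeff v w c k) =
      ∑ i ∈ univ.filter (fun i => v i = x ∧ w i ≤ k), C (c i) * expCoeff v w c (k - w i) := by
  rw [expCoeff, map_sum]
  simp only [pderiv_monomial, monomialDegree_apply, Nat.cast_sum, mul_sum, map_sum]
  rw [sum_comm, ← filter_filter, sum_filter (p := fun i => w i ≤ k)]
  refine sum_congr rfl fun i hi => ?_
  obtain rfl : v i = x := (mem_filter.1 hi).2
  exact sum_monomial_sub_single hw i k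

theorem pderiv_expCoeff_mem_span [DecidableEq σ] (hw : ∀ i, 0 < w i) (x : σ) {k N : ℕ}
    (hk : k ≤ N) :
    pderiv x (expCoeff v w c k) ∈
      Submodule.span K (Set.range fun m : Fin (N + 1) => expCoeff v w c m) := by
  rw [pderiv_expCoeff hw]
  refine Submodule.sum_mem _ fun i _ => ?_
  rw [← smul_eq_C_mul]
  exact Submodule.smul_mem _ _ (Submodule.subset_span ⟨⟨k - w i, by omega⟩, rfl⟩)

omit [Field K] in
lemma monomialDegree_pi_single (v : ι → σ) (i₀ : ι) (m : ℕ) :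
    monomialDegree v (Pi.single i₀ m) = Finsupp.single (v i₀) m := by
  rw [monomialDegree, Fintype.sum_eq_single i₀ fun i hi => by simp [Pi.single_eq_of_ne hi],
    Pi.single_eq_same]

omit [Field K] in
lemma monomialDegree_eq_single_iff {i₀ : ι} (hv : ∀ i ≠ i₀, v i ≠ v i₀) {γ : ι → ℕ} {m : ℕ} :
    monomialDegree v γ = Finsupp.single (v i₀) m ↔ γ = Pi.single i₀ m := by
  classical
  refine ⟨fun h => ?_, fun h => h ▸ monomialDegree_pi_single v i₀ m⟩
  have hγ : γ = Pi.single i₀ (γ i₀) := by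
    funext i
    rcases eq_or_ne i i₀ with rfl | hi
    · rw [Pi.single_eq_same]
    have hle : γ i ≤ monomialDegree v γ (v i) := by
      rw [monomialDegree_apply]
      exact single_le_sum (fun _ _ => Nat.zero_le _) (mem_filter.2 ⟨mem_univ i, rfl⟩)
    rw [h, Finsupp.single_eq_of_ne (hv i hi)] at hle
    rw [Pi.single_eq_of_ne hi]
    omega
  rw [hγ, monomialDegree_pi_single] at h
  rw [hγ, Finsupp.single_injective _ h]

omit [CharZero K] in
lemma coeff_single_expCoeff (hw : ∀ i, 0 < w i) {i₀ : ι} (hv : ∀ i ≠ i₀, v i ≠ v i₀) (m k : ℕ) :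
    coeff (Finsupp.single (v i₀) m) (expCoeff v w c k) =
      if w i₀ * m = k then c i₀ ^ m / m.factorial else 0 := by
  classical
  simp only [expCoeff, powDivFactorial, coeff_sum, coeff_monomial, monomialDegree_eq_single_iff hv,
    sum_ite_eq', mem_weightedExponents hw]
  rw [Fintype.prod_eq_single i₀ fun i hi => by simp [Pi.single_eq_of_ne hi]]
  simp [Pi.single_apply]

theorem linearIndependent_expCoeff (hw : ∀ i, 0 < w i) {i₀ : ι} (hv : ∀ i ≠ i₀, v i ≠ v i₀)
    (hw₀ : w i₀ = 1) (hc₀ : c i₀ ≠ 0) : LinearIndependent K (expCoeff v w c) := by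
  refine linearIndependent_iff'.2 fun s g hg k hk => ?_
  have := congrArg (coeff (Finsupp.single (v i₀) k)) hg
  simp only [coeff_sum, coeff_smul, coeff_single_expCoeff hw hv, hw₀, one_mul, smul_eq_mul,
    mul_ite, mul_zero, sum_ite_eq, hk, if_true, coeff_zero] at this
  exact (mul_eq_zero.1 this).resolve_right
    (div_ne_zero (pow_ne_zero _ hc₀) (Nat.cast_ne_zero.2 k.factorial_ne_zero))

end ExpCoeff

section Lpoly

/- The data presenting `L_k` as an `expCoeff`: `none` indexes the term `x₁ t` and `some (s, j)` the
term `a_{j+2,s+2} t ^ (j + 2) x_{s+2}` of the exponent. -/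
def LpolyVar {d : ℕ} {J : Type*} (hd : 1 ≤ d) : Option (Fin (d - 1) × J) → Fin d
  | none => ⟨0, hd⟩
  | some (s, _) => ⟨s + 1, by omega⟩

def LpolyWeight {S : Type*} {m : ℕ} : Option (S × Fin m) → ℕ
  | none => 1
  | some (_, j) => j + 2

def LpolyCoeff {r m : ℕ} (a : ℕ → ℕ → ℝ) : Option (Fin r × Fin m) → ℝ
  | none => 1
  | some (s, j) => a (j + 2) (s + 2)

lemma LpolyWeight_pos {S : Type*} {m : ℕ} : ∀ i, 0 < LpolyWeight (S := S) (m := m) i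
  | none => Nat.one_pos
  | some _ => Nat.succ_pos _

lemma LpolyVar_ne_LpolyVar_none {d : ℕ} {J : Type*} (hd : 1 ≤ d) :
    ∀ i : Option (Fin (d - 1) × J), i ≠ none →
      LpolyVar hd i ≠ LpolyVar hd (none : Option (Fin (d - 1) × J))
  | none, h => (h rfl).elim
  | some _, _ => by simp [LpolyVar, Fin.ext_iff]

variable {d n : ℕ}

theorem Lpoly_eq_expCoeff (hd : 1 ≤ d) (a : ℕ → ℕ → ℝ) (k : ℕ) :
    Lpoly d n hd a k = expCoeff (LpolyVar (J := Fin (n - 1)) hd) LpolyWeight (LpolyCoeff a) k := by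
  let e : (Option (Fin (d - 1) × Fin (n - 1)) → ℕ) ≃ ℕ × (Fin (d - 1) → Fin (n - 1) → ℕ) :=
    Equiv.piOptionEquivProd.trans ((Equiv.refl ℕ).prodCongr (Equiv.curry _ _ _))
  have hweight (γ) : ∑ i, LpolyWeight i * γ i =
      (e γ).1 + ∑ s, ∑ j : Fin (n - 1), (j.val + 2) * (e γ).2 s j := by
    simp [e, Fintype.sum_option, Fintype.sum_prod_type, LpolyWeight]
  rw [Lpoly]
  simp_rw [sum_filter]
  rw [← sum_product', ← sum_filter]
  symm
  refine sum_equiv e (fun γ => ?_) (fun γ _ => ?_)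
  · rw [mem_weightedExponents LpolyWeight_pos, mem_filter, mem_product, mem_range, mem_Icc,
      hweight, iff_and_self]
    intro hγ
    replace hγ := le_of_weighted_sum_eq LpolyWeight_pos ((hweight γ).trans hγ)
    exact ⟨Nat.lt_succ_of_le (hγ none), fun _ _ => Nat.zero_le _, fun s j => hγ (some (s, j))⟩
  · simp_rw [C_mul_X_pow_eq_monomial, X_pow_eq_monomial]
    rw [← monomial_sum_one, monomial_mul, mul_one]
    congr 1
    · simp [e, monomialDegree, Fintype.sum_option, Fintype.sum_prod_type, LpolyVar,
        Finsupp.single_finsetSum]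
    · simp only [powDivFactorial, Fintype.prod_option, Fintype.prod_prod_type, LpolyCoeff, one_pow]
      rfl

end Lpoly

/-- `ℒ_n = span{L_0, …, L_n}` is an `(n+1)`-dimensional `D`-invariant
subspace of `ℝ[x₁,…,x_d]`: the `L_k` are linearly independent over `ℝ`, every partial
derivative `∂L_k/∂x_s` lies in the span, and the span has dimension `n + 1`. -/
theorem Lpoly_span_D_invariant_and_dim
    (d n : ℕ) (hd : 2 ≤ d) (a : ℕ → ℕ → ℝ) :
    LinearIndependent ℝ
      (fun k : Fin (n + 1) => Lpoly d n (by omega) a k.val) ∧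
    (∀ s : Fin d, ∀ k : ℕ, k ≤ n →
      MvPolynomial.pderiv s (Lpoly d n (by omega) a k) ∈
        Submodule.span ℝ
          (Set.range (fun k : Fin (n + 1) => Lpoly d n (by omega) a k.val))) ∧
    Module.finrank ℝ
      (Submodule.span ℝ
        (Set.range (fun k : Fin (n + 1) => Lpoly d n (by omega) a k.val))) = n + 1 := by
  have hd₁ : 1 ≤ d := by omega
  have hL (k : ℕ) := Lpoly_eq_expCoeff (n := n) hd₁ a k
  have hli : LinearIndependent ℝ fun k : Fin (n + 1) => Lpoly d n hd₁ a k := by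
    simp only [hL]
    exact (linearIndependent_expCoeff LpolyWeight_pos (LpolyVar_ne_LpolyVar_none hd₁) rfl
      one_ne_zero).comp _ Fin.val_injective
  refine ⟨hli, fun s k hk => ?_, by rw [finrank_span_eq_card hli, Fintype.card_fin]⟩
  simp only [hL]
  exact pderiv_expCoeff_mem_span LpolyWeight_pos s hk
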